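/- (Moment–cumulant formula.) Let M : S → ℂ with M(1) = 1 and let L be its admissible cumulants. Then for every word s ∈ S containing at least one letter w, M(s) = Σ_{r∈C_0(s)} L(r) · Π_{v∈W_r(s)} M(v) · M(s∖(r ∪ ⋃_{v∈W_r(s)} v)), where the sum is over all cumulant subwords r of s containing the first w of s, L and M are evaluated at the words determined by the respective sets of positions, and s∖(r ∪ ⋃ v) is the subword of s on the remaining positions (those to the right of the last w of r and not in r). -/

import Mathlib

/-- The two-letter alphabet `{z, w}`. -/
inductive Letter | z | w
deriving DecidableEq

/-- Words: elements of the free monoid `S = FS({z,w})`. -/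
abbrev Word := List Letter

/-- The letter of `s` at position `j` (defaulting to `z`). -/
def letterAt (s : Word) (j : ℕ) : Letter := s.getD j Letter.z

/-- `P` is a partition of the finite set of positions `g ⊆ ℕ` into nonempty blocks. -/
def IsPartitionOn (g : Finset ℕ) (P : Finset (Finset ℕ)) : Prop :=
  (∀ b ∈ P, b.Nonempty) ∧ (P : Set (Finset ℕ)).PairwiseDisjoint id ∧ P.sup id = g

/-- The position `j` is inner with respect to the block `b`:
`j ∉ b` and `min b < j < max b`. -/
def InnerPos (j : ℕ) (b : Finset ℕ) : Prop :=
  j ∉ b ∧ ∃ i ∈ b, ∃ k ∈ b, i < j ∧ j < k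

/-- A partition is admissible if no block contains a letter `w` that is inner
with respect to another block. -/
def Admissible (s : Word) (P : Finset (Finset ℕ)) : Prop :=
  ∀ b ∈ P, ∀ b' ∈ P, b ≠ b' → ∀ j ∈ b, letterAt s j = Letter.w → ¬ InnerPos j b'

open scoped Classical in
/-- The set `AP(s)` of admissible partitions of the positions `g` of the word `s`. -/
noncomputable def APfin (s : Word) (g : Finset ℕ) : Finset (Finset (Finset ℕ)) :=
  g.powerset.powerset.filter fun P => IsPartitionOn g P ∧ Admissible s P

/-- The subword of `s` determined by a set of positions `b`. -/
def wordOf (s : Word) (b : Finset ℕ) : Word :=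
  (b.sort (· ≤ ·)).map (letterAt s)

/-- `L` is the family of admissible cumulants of the moment function `M`:
`M(s) = Σ_{u ∈ AP(s)} L(u₁)⋯L(u_p)` for every nonempty word `s`. -/
def IsCumulants (M L : Word → ℂ) : Prop :=
  ∀ s : Word, s ≠ [] →
    M s = ∑ P ∈ APfin s (Finset.range s.length), ∏ b ∈ P, L (wordOf s b)

/-- `P` refines `Q`: every block of `P` is contained in a block of `Q`. -/
def Refines (P Q : Finset (Finset ℕ)) : Prop := ∀ b ∈ P, ∃ c ∈ Q, b ⊆ c

open scoped Classical in
/-- `m` is the Möbius function of the lattice `AP(s)` of admissible partitions of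
the position set `g` of `s`: `m(u|u) = 1` and `m(u|v) = −Σ_{u ≤ t < v} m(u|t)`. -/
noncomputable def IsMobius (s : Word) (g : Finset ℕ)
    (m : Finset (Finset ℕ) → Finset (Finset ℕ) → ℂ) : Prop :=
  (∀ u ∈ APfin s g, m u u = 1) ∧
    ∀ u ∈ APfin s g, ∀ v ∈ APfin s g, Refines u v → u ≠ v →
      m u v = -∑ t ∈ (APfin s g).filter fun t => Refines u t ∧ Refines t v ∧ t ≠ v, m u t

/-- `r` is a cumulant subword of `s`: no letter `w` of `s` outside `r` lies strictly
between two positions of `r`. -/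
def IsCumulantSubword (s : Word) (r : Finset ℕ) : Prop :=
  ∀ j ∈ Finset.range s.length, letterAt s j = Letter.w → j ∉ r → ¬ InnerPos j r

open scoped Classical in
/-- The `w`-legs of a subword `r` of `s`. -/
noncomputable def wLegs (s : Word) (r : Finset ℕ) : Finset ℕ :=
  r.filter fun i => letterAt s i = Letter.w

open scoped Classical in
/-- `C₀(s)`: the cumulant subwords of `s` containing the first `w` of `s`
(at position `n₀`). -/
noncomputable def C0 (s : Word) (n₀ : ℕ) : Finset (Finset ℕ) :=
  (Finset.range s.length).powerset.filter fun r =>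
    r.Nonempty ∧ n₀ ∈ r ∧ IsCumulantSubword s r

open scoped Classical in
/-- The maximal subword of `s ∖ r` lying (strictly) between the `w`-leg `l` of `r`
and the previous `w`-leg (or before `l` if `l` is the first leg). -/
noncomputable def segBelow (s : Word) (r : Finset ℕ) (l : ℕ) : Finset ℕ :=
  (Finset.range s.length).filter fun i =>
    i ∉ r ∧ i < l ∧ ∀ j ∈ wLegs s r, j < l → j < i

open scoped Classical in
/-- The positions of `s` to the right of the last `w`-leg of `r` and not in `r`. -/
noncomputable def afterLegs (s : Word) (r : Finset ℕ) : Finset ℕ :=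
  (Finset.range s.length).filter fun i => i ∉ r ∧ ∀ j ∈ wLegs s r, j < i

/-!
Sort the admissible partitions of `s` by their block `r` through the first `w`; this block is
a cumulant subword. A block straddling a `w`-leg of `r` would make that leg inner to it, so
every other block lies in a single gap: below a leg (above the previous one) or after the last
leg. The gaps below legs contain only letters `z`, hence any partitions of the gaps assemble,
together with `r`, to an admissible partition. The sum over the remaining blocks thus factors
over the gaps, and each factor is the moment of the gap's subword by the defining recursion,
read through the order-preserving relabelling of its positions.
-/

open scoped Classical

section Partitions

variable {g h : Finset ℕ} {P Q : Finset (Finset ℕ)}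

theorem IsPartitionOn.subset_of_mem (hP : IsPartitionOn g P) {b : Finset ℕ} (hb : b ∈ P) :
    b ⊆ g :=
  hP.2.2 ▸ Finset.le_sup (f := id) hb

theorem IsPartitionOn.exists_mem (hP : IsPartitionOn g P) {i : ℕ} (hi : i ∈ g) :
    ∃ b ∈ P, i ∈ b := by
  rw [← hP.2.2] at hi
  simpa using Finset.mem_sup.1 hi

theorem IsPartitionOn.eq_of_mem_of_mem (hP : IsPartitionOn g P) {b b' : Finset ℕ}
    (hb : b ∈ P) (hb' : b' ∈ P) {i : ℕ} (hib : i ∈ b) (hib' : i ∈ b') : b = b' :=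
  hP.2.1.elim hb hb' (Finset.not_disjoint_iff.2 ⟨i, hib, hib'⟩)

theorem isPartitionOn_empty_iff : IsPartitionOn ∅ P ↔ P = ∅ := by
  refine ⟨fun hP => Finset.eq_empty_of_forall_notMem fun b hb => ?_, ?_⟩
  · obtain ⟨i, hi⟩ := hP.1 b hb
    simpa using hP.subset_of_mem hb hi
  · rintro rfl
    simp [IsPartitionOn]

theorem isPartitionOn_singleton {r : Finset ℕ} (hr : r.Nonempty) : IsPartitionOn r {r} := by
  simp [IsPartitionOn, hr]

theorem IsPartitionOn.disjoint (hP : IsPartitionOn g P) (hQ : IsPartitionOn h Q)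
    (hgh : Disjoint g h) : Disjoint P Q := by
  refine Finset.disjoint_left.2 fun b hbP hbQ => ?_
  obtain ⟨i, hi⟩ := hP.1 b hbP
  exact Finset.disjoint_left.1 hgh (hP.subset_of_mem hbP hi) (hQ.subset_of_mem hbQ hi)

theorem IsPartitionOn.union (hP : IsPartitionOn g P) (hQ : IsPartitionOn h Q)
    (hgh : Disjoint g h) : IsPartitionOn (g ∪ h) (P ∪ Q) := by
  refine ⟨fun b hb => (Finset.mem_union.1 hb).elim (hP.1 b) (hQ.1 b), ?_, ?_⟩
  · rw [Finset.coe_union, Set.pairwiseDisjoint_union]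
    exact ⟨hP.2.1, hQ.2.1, fun b hb c hc _ =>
      hgh.mono (hP.subset_of_mem hb) (hQ.subset_of_mem hc)⟩
  · rw [Finset.sup_union, hP.2.2, hQ.2.2]
    rfl

theorem IsPartitionOn.insert (hQ : IsPartitionOn h Q) {r : Finset ℕ} (hr : r.Nonempty)
    (hrh : Disjoint r h) : IsPartitionOn (r ∪ h) (insert r Q) :=
  Finset.insert_eq r Q ▸ (isPartitionOn_singleton hr).union hQ hrh

theorem IsPartitionOn.erase (hP : IsPartitionOn g P) {r : Finset ℕ} (hr : r ∈ P) :
    IsPartitionOn (g \ r) (P.erase r) := by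
  refine ⟨fun b hb => hP.1 b (Finset.mem_of_mem_erase hb),
    hP.2.1.subset (Finset.coe_subset.2 (Finset.erase_subset r P)), ?_⟩
  ext i
  simp only [Finset.mem_sup, Finset.mem_erase, Finset.mem_sdiff, id]
  constructor
  · rintro ⟨b, ⟨hbr, hb⟩, hib⟩
    exact ⟨hP.subset_of_mem hb hib, fun hir => hbr (hP.eq_of_mem_of_mem hb hr hib hir)⟩
  · rintro ⟨hig, hir⟩
    obtain ⟨b, hb, hib⟩ := hP.exists_mem hig
    exact ⟨b, ⟨fun hbr => hir (hbr ▸ hib), hb⟩, hib⟩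

theorem IsPartitionOn.filter_subset_left (hP : IsPartitionOn (g ∪ h) P) (hgh : Disjoint g h)
    (hsplit : ∀ b ∈ P, b ⊆ g ∨ b ⊆ h) : IsPartitionOn g (P.filter (· ⊆ g)) := by
  refine ⟨fun b hb => hP.1 b (Finset.mem_filter.1 hb).1,
    hP.2.1.subset (Finset.coe_subset.2 (Finset.filter_subset _ P)), ?_⟩
  ext i
  simp only [Finset.mem_sup, Finset.mem_filter, id]
  constructor
  · rintro ⟨b, ⟨-, hbg⟩, hib⟩
    exact hbg hib
  · intro hig
    obtain ⟨b, hb, hib⟩ := hP.exists_mem (Finset.mem_union_left h hig)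
    refine ⟨b, ⟨hb, (hsplit b hb).resolve_right fun hbh => ?_⟩, hib⟩
    exact Finset.disjoint_left.1 hgh hig (hbh hib)

theorem IsPartitionOn.filter_subset_union_left (hP : IsPartitionOn g P)
    (hQ : IsPartitionOn h Q) (hgh : Disjoint g h) : (P ∪ Q).filter (· ⊆ g) = P := by
  ext b
  simp only [Finset.mem_filter, Finset.mem_union]
  refine ⟨?_, fun hb => ⟨Or.inl hb, hP.subset_of_mem hb⟩⟩
  rintro ⟨hb | hb, hbg⟩
  · exact hb
  · obtain ⟨i, hi⟩ := hQ.1 b hb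
    exact absurd (hQ.subset_of_mem hb hi) (Finset.disjoint_left.1 hgh (hbg hi))

end Partitions

theorem mem_APfin {s : Word} {g : Finset ℕ} {P : Finset (Finset ℕ)} :
    P ∈ APfin s g ↔ IsPartitionOn g P ∧ Admissible s P := by
  refine ⟨fun h => (Finset.mem_filter.1 h).2, fun h => Finset.mem_filter.2 ⟨?_, h⟩⟩
  exact Finset.mem_powerset.2 fun b hb => Finset.mem_powerset.2 (h.1.subset_of_mem hb)

theorem subset_of_mem_APfin {s : Word} {g c : Finset ℕ} {P : Finset (Finset ℕ)}
    (hP : P ∈ APfin s g) (hc : c ∈ P) : c ⊆ g :=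
  (mem_APfin.1 hP).1.subset_of_mem hc

theorem APfin_empty (s : Word) : APfin s ∅ = {∅} := by
  ext P
  simp only [mem_APfin, isPartitionOn_empty_iff, Finset.mem_singleton, and_iff_left_iff_imp]
  rintro rfl
  simp [Admissible]

theorem Admissible.mono {s : Word} {P P' : Finset (Finset ℕ)} (h : Admissible s P)
    (hsub : P' ⊆ P) : Admissible s P' :=
  fun b hb b' hb' => h b (hsub hb) b' (hsub hb')

section Relabel

variable {u v : Word} {a b : Finset ℕ} {φ ψ : ℕ → ℕ} {P : Finset (Finset ℕ)}

theorem Finset.sort_image_of_strictMonoOn (hφ : StrictMonoOn φ a) {c : Finset ℕ} (hc : c ⊆ a) :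
    (c.image φ).sort (· ≤ ·) = (c.sort (· ≤ ·)).map φ := by
  have hmem : ∀ x ∈ c.sort (· ≤ ·), x ∈ (a : Set ℕ) :=
    fun x hx => hc ((Finset.mem_sort _).1 hx)
  refine List.Perm.eq_of_pairwise' (Finset.pairwise_sort _ _) ?_ ?_
  · rw [List.pairwise_map]
    exact (Finset.sortedLT_sort c).pairwise.imp_of_mem
      fun hx hy hxy => (hφ (hmem _ hx) (hmem _ hy) hxy).le
  · refine List.perm_of_nodup_nodup_toFinset_eq (Finset.sort_nodup _ _)
      ((Finset.sort_nodup _ _).map_on fun x hx y hy => hφ.injOn (hmem x hx) (hmem y hy)) ?_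
    ext x
    simp

theorem wordOf_image (hφ : StrictMonoOn φ a)
    (hletter : ∀ x ∈ a, letterAt v (φ x) = letterAt u x) {c : Finset ℕ} (hc : c ⊆ a) :
    wordOf v (c.image φ) = wordOf u c := by
  rw [wordOf, wordOf, Finset.sort_image_of_strictMonoOn hφ hc, List.map_map]
  exact List.map_congr_left fun x hx => hletter x (hc ((Finset.mem_sort _).1 hx))

theorem IsPartitionOn.image (hP : IsPartitionOn a P) (hφ : Set.InjOn φ a) :
    IsPartitionOn (a.image φ) (P.image (Finset.image φ)) := by
  refine ⟨?_, ?_, ?_⟩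
  · simp only [Finset.mem_image]
    rintro _ ⟨c, hc, rfl⟩
    exact (hP.1 c hc).image φ
  · rw [Finset.coe_image]
    rintro _ ⟨c, hc, rfl⟩ _ ⟨c', hc', rfl⟩ hne
    refine Finset.disjoint_left.2 fun y hy hy' => hne ?_
    obtain ⟨x, hx, rfl⟩ := Finset.mem_image.1 hy
    obtain ⟨x', hx', hxx'⟩ := Finset.mem_image.1 hy'
    have := hφ (hP.subset_of_mem hc' hx') (hP.subset_of_mem hc hx) hxx'
    rw [hP.eq_of_mem_of_mem hc hc' hx (this ▸ hx')]
  · ext y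
    simp only [Finset.mem_sup, Finset.mem_image, id, exists_exists_and_eq_and]
    constructor
    · rintro ⟨c, hc, x, hx, rfl⟩
      exact ⟨x, hP.subset_of_mem hc hx, rfl⟩
    · rintro ⟨x, hx, rfl⟩
      obtain ⟨c, hc, hxc⟩ := hP.exists_mem hx
      exact ⟨c, hc, x, hxc, rfl⟩

theorem Admissible.image (h : Admissible u P) (hφ : StrictMonoOn φ a)
    (hPa : ∀ c ∈ P, c ⊆ a) (hletter : ∀ x ∈ a, letterAt v (φ x) = letterAt u x) :
    Admissible v (P.image (Finset.image φ)) := by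
  simp only [Admissible, Finset.mem_image]
  rintro _ ⟨c, hc, rfl⟩ _ ⟨c', hc', rfl⟩ hne _ hj hjw ⟨hjc', _, hi', _, hk', hij, hjk⟩
  obtain ⟨x, hx, rfl⟩ := Finset.mem_image.1 hj
  obtain ⟨i, hi, rfl⟩ := Finset.mem_image.1 hi'
  obtain ⟨k, hk, rfl⟩ := Finset.mem_image.1 hk'
  have hxa := hPa c hc hx
  refine h c hc c' hc' (fun hcc' => hne (hcc' ▸ rfl)) x hx (hletter x hxa ▸ hjw)
    ⟨fun hxc' => hjc' (Finset.mem_image_of_mem φ hxc'), i, hi, k, hk, ?_, ?_⟩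
  · exact (hφ.lt_iff_lt (hPa c' hc' hi) hxa).1 hij
  · exact (hφ.lt_iff_lt hxa (hPa c' hc' hk)).1 hjk

theorem image_mem_APfin (hP : P ∈ APfin u a) (hφ : StrictMonoOn φ a) (hbij : Set.BijOn φ a b)
    (hletter : ∀ x ∈ a, letterAt v (φ x) = letterAt u x) :
    P.image (Finset.image φ) ∈ APfin v b := by
  obtain ⟨hpart, hadm⟩ := mem_APfin.1 hP
  have hab : a.image φ = b := Finset.coe_injective (by rw [Finset.coe_image, hbij.image_eq])
  exact mem_APfin.2 ⟨hab ▸ hpart.image hbij.injOn,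
    hadm.image hφ (fun c hc => hpart.subset_of_mem hc) hletter⟩

theorem Finset.image_image_of_leftInvOn (hinv : Set.LeftInvOn ψ φ a) {c : Finset ℕ}
    (hc : c ⊆ a) : (c.image φ).image ψ = c :=
  Finset.coe_injective (by push_cast; exact hinv.image_image' hc)

theorem image_image_blocks_of_leftInvOn (hinv : Set.LeftInvOn ψ φ a) (hPa : ∀ c ∈ P, c ⊆ a) :
    (P.image (Finset.image φ)).image (Finset.image ψ) = P := by
  rw [Finset.image_image]
  exact (Finset.image_congr fun c hc => Finset.image_image_of_leftInvOn hinv (hPa c hc)).trans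
    P.image_id

theorem sum_APfin_eq_of_strictMonoOn (F : Word → ℂ) (hφ : StrictMonoOn φ a)
    (hbij : Set.BijOn φ a b) (hinv : Set.InvOn ψ φ a b)
    (hletter : ∀ x ∈ a, letterAt v (φ x) = letterAt u x) :
    ∑ P ∈ APfin u a, ∏ c ∈ P, F (wordOf u c) = ∑ Q ∈ APfin v b, ∏ c ∈ Q, F (wordOf v c) := by
  have hbijψ : Set.BijOn ψ b a := hbij.symm hinv.symm
  have hψ : StrictMonoOn ψ b := fun x hx y hy hxy => by
    rwa [← hφ.lt_iff_lt (hbijψ.mapsTo hx) (hbijψ.mapsTo hy), hinv.2.eq hx, hinv.2.eq hy]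
  have hletterψ : ∀ y ∈ b, letterAt u (ψ y) = letterAt v y := fun y hy => by
    rw [← hletter _ (hbijψ.mapsTo hy), hinv.2.eq hy]
  refine Finset.sum_nbij' (fun P => P.image (Finset.image φ)) (fun Q => Q.image (Finset.image ψ))
    (fun P hP => image_mem_APfin hP hφ hbij hletter)
    (fun Q hQ => image_mem_APfin hQ hψ hbijψ hletterψ)
    (fun P hP => image_image_blocks_of_leftInvOn hinv.1 fun c => subset_of_mem_APfin hP)
    (fun Q hQ => image_image_blocks_of_leftInvOn hinv.2 fun c => subset_of_mem_APfin hQ)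
    fun P hP => ?_
  have hPa : ∀ c ∈ P, c ⊆ a := fun c => subset_of_mem_APfin hP
  rw [Finset.prod_image fun c hc c' hc' hcc' => by
    rw [← Finset.image_image_of_leftInvOn hinv.1 (hPa c hc), hcc',
      Finset.image_image_of_leftInvOn hinv.1 (hPa c' hc')]]
  exact Finset.prod_congr rfl fun c hc => by rw [wordOf_image hφ hletter (hPa c hc)]

end Relabel

theorem sum_APfin_wordOf (F : Word → ℂ) (s : Word) (g : Finset ℕ) :
    ∑ P ∈ APfin (wordOf s g) (Finset.range (wordOf s g).length),
        ∏ c ∈ P, F (wordOf (wordOf s g) c)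
      = ∑ P ∈ APfin s g, ∏ c ∈ P, F (wordOf s c) := by
  set e := g.sort (· ≤ ·)
  have hlen : (wordOf s g).length = e.length := List.length_map _
  have hget : ∀ j ∈ Finset.range (wordOf s g).length, ∃ h : j < e.length, e.getD j 0 = e[j] :=
    fun j hj => ⟨by simpa [hlen] using hj, List.getD_eq_getElem _ _ _⟩
  have hinv : Set.InvOn e.idxOf (fun j => e.getD j 0)
      (Finset.range (wordOf s g).length) g := by
    refine ⟨fun j hj => ?_, fun i hi => ?_⟩
    · obtain ⟨hj, hj'⟩ := hget j hj
      simp only [hj']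
      exact (Finset.sort_nodup _ _).idxOf_getElem _ _
    · have hlt : e.idxOf i < e.length := List.idxOf_lt_length_iff.2 ((Finset.mem_sort _).2 hi)
      simp only [List.getD_eq_getElem _ _ hlt]
      exact List.getElem_idxOf hlt
  have hmaps : Set.MapsTo (fun j => e.getD j 0) (Finset.range (wordOf s g).length) g :=
    fun j hj => by
      obtain ⟨hj, hj'⟩ := hget j hj
      show e.getD j 0 ∈ g
      rw [hj']
      exact (Finset.mem_sort _).1 (e.getElem_mem hj)
  refine sum_APfin_eq_of_strictMonoOn F (fun x hx y hy hxy => ?_)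
    (hinv.bijOn hmaps fun i hi => ?_) hinv fun j hj => ?_
  · obtain ⟨hx, hx'⟩ := hget x hx
    obtain ⟨hy, hy'⟩ := hget y hy
    simpa only [hx', hy'] using (Finset.sortedLT_sort g).getElem_lt_getElem_of_lt hxy
  · simpa [hlen] using List.idxOf_lt_length_iff.2 ((Finset.mem_sort _).2 hi)
  · obtain ⟨hj, hj'⟩ := hget j (Finset.mem_coe.1 hj)
    show letterAt s (e.getD j 0) = (e.map (letterAt s)).getD j Letter.z
    rw [hj', List.getD_eq_getElem _ _ (by simpa using hj), List.getElem_map]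

theorem IsCumulants.moment_wordOf {M L : Word → ℂ} (hL : IsCumulants M L) (hM1 : M [] = 1)
    (s : Word) (g : Finset ℕ) :
    M (wordOf s g) = ∑ P ∈ APfin s g, ∏ c ∈ P, L (wordOf s c) := by
  rcases g.eq_empty_or_nonempty with rfl | hg
  · simp [wordOf, hM1, APfin_empty]
  · have hne : wordOf s g ≠ [] := by
      rw [← List.length_pos_iff, wordOf, List.length_map, Finset.length_sort]
      exact hg.card_pos
    rw [hL _ hne, sum_APfin_wordOf]

noncomputable def APfinWith (s : Word) (r h : Finset ℕ) : Finset (Finset (Finset ℕ)) :=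
  h.powerset.powerset.filter fun Q => IsPartitionOn h Q ∧ Admissible s (insert r Q)

section BlockOf

variable {s : Word} {g h r : Finset ℕ} {P Q : Finset (Finset ℕ)}

theorem mem_APfinWith :
    Q ∈ APfinWith s r h ↔ IsPartitionOn h Q ∧ Admissible s (insert r Q) := by
  refine ⟨fun hQ => (Finset.mem_filter.1 hQ).2, fun hQ => Finset.mem_filter.2 ⟨?_, hQ⟩⟩
  exact Finset.mem_powerset.2 fun b hb => Finset.mem_powerset.2 (hQ.1.subset_of_mem hb)

theorem mem_C0 {n₀ : ℕ} :
    r ∈ C0 s n₀ ↔ r ⊆ Finset.range s.length ∧ r.Nonempty ∧ n₀ ∈ r ∧ IsCumulantSubword s r := by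
  rw [C0, Finset.mem_filter, Finset.mem_powerset]

theorem Admissible.isCumulantSubword (hadm : Admissible s P)
    (hP : IsPartitionOn (Finset.range s.length) P) (hr : r ∈ P) : IsCumulantSubword s r := by
  intro j hj hjw hjr
  obtain ⟨b, hb, hjb⟩ := hP.exists_mem hj
  exact hadm b hb r hr (fun hbr => hjr (hbr ▸ hjb)) j hjb hjw

noncomputable def blockOf (n : ℕ) (P : Finset (Finset ℕ)) : Finset ℕ :=
  (P.filter (n ∈ ·)).sup id

theorem IsPartitionOn.blockOf_eq (hP : IsPartitionOn g P) {b : Finset ℕ} (hb : b ∈ P) {n : ℕ}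
    (hn : n ∈ b) : blockOf n P = b := by
  have hfilter : P.filter (n ∈ ·) = {b} := by
    ext c
    simp only [Finset.mem_filter, Finset.mem_singleton]
    exact ⟨fun hc => hP.eq_of_mem_of_mem hc.1 hb hc.2 hn, by rintro rfl; exact ⟨hb, hn⟩⟩
  rw [blockOf, hfilter, Finset.sup_singleton, id]

theorem IsPartitionOn.blockOf_mem (hP : IsPartitionOn g P) {n : ℕ} (hn : n ∈ g) :
    blockOf n P ∈ P ∧ n ∈ blockOf n P := by
  obtain ⟨b, hb, hnb⟩ := hP.exists_mem hn
  rw [hP.blockOf_eq hb hnb]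
  exact ⟨hb, hnb⟩

theorem blockOf_mem_C0 {n₀ : ℕ} (hn₀ : n₀ < s.length)
    (hP : P ∈ APfin s (Finset.range s.length)) : blockOf n₀ P ∈ C0 s n₀ := by
  obtain ⟨hpart, hadm⟩ := mem_APfin.1 hP
  obtain ⟨hmem, hn₀mem⟩ := hpart.blockOf_mem (Finset.mem_range.2 hn₀)
  exact mem_C0.2 ⟨hpart.subset_of_mem hmem, ⟨n₀, hn₀mem⟩, hn₀mem,
    hadm.isCumulantSubword hpart hmem⟩

theorem sum_APfin_filter_blockOf (F : Word → ℂ) {n : ℕ} (hn : n ∈ r) (hrg : r ⊆ g) :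
    ∑ P ∈ (APfin s g).filter (blockOf n · = r), ∏ c ∈ P, F (wordOf s c)
      = F (wordOf s r) * ∑ Q ∈ APfinWith s r (g \ r), ∏ c ∈ Q, F (wordOf s c) := by
  have hrP : ∀ P ∈ (APfin s g).filter (blockOf n · = r), r ∈ P := by
    intro P hP
    obtain ⟨hP, hPr⟩ := Finset.mem_filter.1 hP
    exact hPr ▸ ((mem_APfin.1 hP).1.blockOf_mem (hrg hn)).1
  have hrQ : ∀ Q ∈ APfinWith s r (g \ r), r ∉ Q := fun Q hQ hrQ =>
    (Finset.mem_sdiff.1 ((mem_APfinWith.1 hQ).1.subset_of_mem hrQ hn)).2 hn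
  rw [Finset.mul_sum]
  refine Finset.sum_nbij' (fun P => P.erase r) (insert r) (fun P hP => ?_) (fun Q hQ => ?_)
    (fun P hP => Finset.insert_erase (hrP P hP)) (fun Q hQ => Finset.erase_insert (hrQ Q hQ))
    (fun P hP => (Finset.mul_prod_erase P _ (hrP P hP)).symm)
  · obtain ⟨hpart, hadm⟩ := mem_APfin.1 (Finset.mem_filter.1 hP).1
    exact mem_APfinWith.2 ⟨hpart.erase (hrP P hP), (Finset.insert_erase (hrP P hP)).symm ▸ hadm⟩
  · obtain ⟨hpart, hadm⟩ := mem_APfinWith.1 hQ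
    have hins : IsPartitionOn g (insert r Q) :=
      Finset.union_sdiff_of_subset hrg ▸ hpart.insert ⟨n, hn⟩ Finset.disjoint_sdiff
    exact Finset.mem_filter.2
      ⟨mem_APfin.2 ⟨hins, hadm⟩, hins.blockOf_eq (Finset.mem_insert_self r Q) hn⟩

end BlockOf

section SplitAtLeg

variable {s : Word} {r g h : Finset ℕ} {d : ℕ}

theorem subset_or_subset_of_mem_APfinWith (hgd : ∀ i ∈ g, i < d) (hdh : ∀ i ∈ h, d < i)
    (hdr : d ∈ r) (hdw : letterAt s d = Letter.w) {Q : Finset (Finset ℕ)}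
    (hQ : Q ∈ APfinWith s r (g ∪ h)) {b : Finset ℕ} (hb : b ∈ Q) : b ⊆ g ∨ b ⊆ h := by
  obtain ⟨hpart, hadm⟩ := mem_APfinWith.1 hQ
  have hbgh := hpart.subset_of_mem hb
  have hdb : d ∉ b := fun hdb => (Finset.mem_union.1 (hbgh hdb)).elim
    (fun hd => lt_irrefl d (hgd d hd)) (fun hd => lt_irrefl d (hdh d hd))
  by_contra! hcon
  obtain ⟨i, hib, hih⟩ := Finset.not_subset.1 hcon.2
  obtain ⟨k, hkb, hkg⟩ := Finset.not_subset.1 hcon.1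
  exact hadm r (Finset.mem_insert_self r Q) b (Finset.mem_insert_of_mem hb)
    (fun hrb => hdb (hrb ▸ hdr)) d hdr hdw
    ⟨hdb, i, hib, k, hkb, hgd i ((Finset.mem_union.1 (hbgh hib)).resolve_right hih),
      hdh k ((Finset.mem_union.1 (hbgh hkb)).resolve_left hkg)⟩

/-- Blocks inside `g` carry no letter `w` and, by `hlegs`, do not surround a `w`-leg of `r`,
so they never violate admissibility. -/
theorem Admissible.insert_union (hgd : ∀ i ∈ g, i < d) (hdh : ∀ i ∈ h, d < i)
    (hgz : ∀ i ∈ g, letterAt s i ≠ Letter.w)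
    (hlegs : ∀ j ∈ r, letterAt s j = Letter.w → (∀ i ∈ g, j < i) ∨ ∀ i ∈ g, i < j)
    {Q₁ Q₂ : Finset (Finset ℕ)} (hQ₁ : IsPartitionOn g Q₁) (hQ₂ : IsPartitionOn h Q₂)
    (hadm₂ : Admissible s (insert r Q₂)) : Admissible s (insert r (Q₁ ∪ Q₂)) := by
  intro b hb b' hb' hbb' j hj hjw
  simp only [Finset.mem_insert, Finset.mem_union] at hb hb'
  rcases hb with rfl | hb₁ | hb₂
  · rcases hb' with rfl | hb'₁ | hb'₂
    · exact absurd rfl hbb'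
    · rintro ⟨-, i, hi, k, hk, hij, hjk⟩
      rcases hlegs j hj hjw with hlt | hlt
      · exact (hlt i (hQ₁.subset_of_mem hb'₁ hi)).not_gt hij
      · exact (hlt k (hQ₁.subset_of_mem hb'₁ hk)).not_gt hjk
    · exact hadm₂ b (Finset.mem_insert_self b Q₂) b' (Finset.mem_insert_of_mem hb'₂) hbb' j hj hjw
  · exact absurd hjw (hgz j (hQ₁.subset_of_mem hb₁ hj))
  · rcases hb' with rfl | hb'₁ | hb'₂
    · exact hadm₂ b (Finset.mem_insert_of_mem hb₂) b' (Finset.mem_insert_self b' Q₂) hbb' j hj hjw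
    · rintro ⟨-, -, -, k, hk, -, hjk⟩
      exact (hgd k (hQ₁.subset_of_mem hb'₁ hk)).not_gt
        ((hdh j (hQ₂.subset_of_mem hb₂ hj)).trans hjk)
    · exact hadm₂ b (Finset.mem_insert_of_mem hb₂) b' (Finset.mem_insert_of_mem hb'₂) hbb' j hj hjw

theorem sum_APfinWith_union (F : Word → ℂ) (hgd : ∀ i ∈ g, i < d) (hdh : ∀ i ∈ h, d < i)
    (hdr : d ∈ r) (hdw : letterAt s d = Letter.w) (hgz : ∀ i ∈ g, letterAt s i ≠ Letter.w)
    (hlegs : ∀ j ∈ r, letterAt s j = Letter.w → (∀ i ∈ g, j < i) ∨ ∀ i ∈ g, i < j) :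
    ∑ Q ∈ APfinWith s r (g ∪ h), ∏ c ∈ Q, F (wordOf s c)
      = (∑ Q ∈ APfin s g, ∏ c ∈ Q, F (wordOf s c)) *
          ∑ Q ∈ APfinWith s r h, ∏ c ∈ Q, F (wordOf s c) := by
  have hgh : Disjoint g h :=
    Finset.disjoint_left.2 fun i hig hih => (hgd i hig).not_gt (hdh i hih)
  have hsplit := fun Q (hQ : Q ∈ APfinWith s r (g ∪ h)) b (hb : b ∈ Q) =>
    subset_or_subset_of_mem_APfinWith hgd hdh hdr hdw hQ hb
  rw [Finset.sum_mul_sum, ← Finset.sum_product']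
  refine (Finset.sum_nbij' (fun p => p.1 ∪ p.2) (fun Q => (Q.filter (· ⊆ g), Q.filter (· ⊆ h)))
    (fun p hp => ?_) (fun Q hQ => ?_) (fun p hp => ?_) (fun Q hQ => ?_) (fun p hp => ?_)).symm
  · obtain ⟨hQ₁, hQ₂⟩ := Finset.mem_product.1 hp
    obtain ⟨hpart₂, hadm₂⟩ := mem_APfinWith.1 hQ₂
    exact mem_APfinWith.2 ⟨(mem_APfin.1 hQ₁).1.union hpart₂ hgh,
      hadm₂.insert_union hgd hdh hgz hlegs (mem_APfin.1 hQ₁).1 hpart₂⟩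
  · obtain ⟨hpart, hadm⟩ := mem_APfinWith.1 hQ
    refine Finset.mem_product.2 ⟨mem_APfin.2 ⟨hpart.filter_subset_left hgh (hsplit Q hQ), ?_⟩,
      mem_APfinWith.2 ⟨(Finset.union_comm g h ▸ hpart).filter_subset_left hgh.symm
        fun b hb => (hsplit Q hQ b hb).symm, ?_⟩⟩
    · exact hadm.mono ((Finset.filter_subset _ Q).trans (Finset.subset_insert r Q))
    · exact hadm.mono (Finset.insert_subset_insert r (Finset.filter_subset _ Q))
  · obtain ⟨hQ₁, hQ₂⟩ := Finset.mem_product.1 hp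
    have hpart₁ := (mem_APfin.1 hQ₁).1
    have hpart₂ := (mem_APfinWith.1 hQ₂).1
    rw [hpart₁.filter_subset_union_left hpart₂ hgh, Finset.union_comm,
      hpart₂.filter_subset_union_left hpart₁ hgh.symm]
  · rw [← Finset.filter_or, Finset.filter_true_of_mem (hsplit Q hQ)]
  · obtain ⟨hQ₁, hQ₂⟩ := Finset.mem_product.1 hp
    exact (Finset.prod_union
      ((mem_APfin.1 hQ₁).1.disjoint (mem_APfinWith.1 hQ₂).1 hgh)).symm

end SplitAtLeg

noncomputable def beyondLegs (s : Word) (r T : Finset ℕ) : Finset ℕ :=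
  (Finset.range s.length).filter fun i => i ∉ r ∧ ∀ j ∈ wLegs s r, j ∉ T → j < i

section Legs

variable {s : Word} {r T : Finset ℕ} {i l : ℕ}

theorem mem_wLegs : l ∈ wLegs s r ↔ l ∈ r ∧ letterAt s l = Letter.w :=
  Finset.mem_filter

theorem mem_segBelow : i ∈ segBelow s r l ↔
    i < s.length ∧ i ∉ r ∧ i < l ∧ ∀ j ∈ wLegs s r, j < l → j < i := by
  rw [segBelow, Finset.mem_filter, Finset.mem_range]

theorem mem_afterLegs : i ∈ afterLegs s r ↔ i < s.length ∧ i ∉ r ∧ ∀ j ∈ wLegs s r, j < i := by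
  rw [afterLegs, Finset.mem_filter, Finset.mem_range]

theorem mem_beyondLegs : i ∈ beyondLegs s r T ↔
    i < s.length ∧ i ∉ r ∧ ∀ j ∈ wLegs s r, j ∉ T → j < i := by
  rw [beyondLegs, Finset.mem_filter, Finset.mem_range]

theorem beyondLegs_empty : beyondLegs s r ∅ = afterLegs s r := by
  ext i
  simp [mem_beyondLegs, mem_afterLegs]

theorem beyondLegs_wLegs : beyondLegs s r (wLegs s r) = Finset.range s.length \ r := by
  ext i
  simp +contextual [mem_beyondLegs]

theorem beyondLegs_insert {a : ℕ} (har : a ∈ r) (haT : ∀ x ∈ T, a < x)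
    (hup : ∀ j ∈ wLegs s r, j ∉ insert a T → j < a) :
    beyondLegs s r (insert a T) = segBelow s r a ∪ beyondLegs s r T := by
  ext i
  simp only [Finset.mem_union, mem_beyondLegs, mem_segBelow, Finset.mem_insert, not_or]
  constructor
  · rintro ⟨his, hir, hi⟩
    rcases lt_trichotomy i a with hia | rfl | hai
    · exact Or.inl ⟨his, hir, hia, fun j hj hja =>
        hi j hj ⟨hja.ne, fun hjT => (haT j hjT).not_gt hja⟩⟩
    · exact absurd har hir
    · refine Or.inr ⟨his, hir, fun j hj hjT => ?_⟩
      by_cases hja : j = a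
      · exact hja ▸ hai
      · exact hi j hj ⟨hja, hjT⟩
  · rintro (⟨his, hir, -, hi⟩ | ⟨his, hir, hi⟩)
    · exact ⟨his, hir, fun j hj hjT => hi j hj (hup j hj (by simpa [not_or] using hjT))⟩
    · exact ⟨his, hir, fun j hj hjT => hi j hj hjT.2⟩

theorem APfinWith_afterLegs (hr : IsCumulantSubword s r) :
    APfinWith s r (afterLegs s r) = APfin s (afterLegs s r) := by
  ext Q
  rw [mem_APfinWith, mem_APfin]
  refine ⟨fun hQ => ⟨hQ.1, hQ.2.mono (Finset.subset_insert r Q)⟩, fun ⟨hpart, hadm⟩ => ⟨hpart, ?_⟩⟩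
  intro b hb b' hb' hbb' j hj hjw
  rcases Finset.mem_insert.1 hb with rfl | hbQ
  · rcases Finset.mem_insert.1 hb' with rfl | hb'Q
    · exact absurd rfl hbb'
    · rintro ⟨-, i, hi, -, -, hij, -⟩
      exact (mem_afterLegs.1 (hpart.subset_of_mem hb'Q hi)).2.2 j (mem_wLegs.2 ⟨hj, hjw⟩)
        |>.not_gt hij
  · obtain ⟨hjs, hjr, -⟩ := mem_afterLegs.1 (hpart.subset_of_mem hbQ hj)
    rcases Finset.mem_insert.1 hb' with rfl | hb'Q
    · exact hr j (Finset.mem_range.2 hjs) hjw hjr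
    · exact hadm b hbQ b' hb'Q hbb' j hj hjw

theorem letterAt_ne_w_of_mem_segBelow {n₀ : ℕ} (hr : IsCumulantSubword s r) (hn₀ : n₀ ∈ r)
    (hfirst : ∀ i < n₀, letterAt s i ≠ Letter.w) (hl : l ∈ r) (hi : i ∈ segBelow s r l) :
    letterAt s i ≠ Letter.w := by
  obtain ⟨his, hir, hil, -⟩ := mem_segBelow.1 hi
  intro hiw
  rcases lt_trichotomy i n₀ with hin | rfl | hni
  · exact hfirst i hin hiw
  · exact hir hn₀
  · exact hr i (Finset.mem_range.2 his) hiw hir ⟨hir, n₀, hn₀, l, hl, hni, hil⟩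

end Legs

theorem sum_APfinWith_beyondLegs (F : Word → ℂ) {s : Word} {r : Finset ℕ} {n₀ : ℕ}
    (hr : IsCumulantSubword s r) (hn₀ : n₀ ∈ r) (hfirst : ∀ i < n₀, letterAt s i ≠ Letter.w)
    (T : Finset ℕ) (hT : T ⊆ wLegs s r) (hup : ∀ j ∈ wLegs s r, j ∉ T → ∀ l ∈ T, j < l) :
    ∑ Q ∈ APfinWith s r (beyondLegs s r T), ∏ c ∈ Q, F (wordOf s c)
      = (∏ l ∈ T, ∑ Q ∈ APfin s (segBelow s r l), ∏ c ∈ Q, F (wordOf s c)) *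
          ∑ Q ∈ APfin s (afterLegs s r), ∏ c ∈ Q, F (wordOf s c) := by
  induction T using Finset.induction_on_min with
  | empty => rw [beyondLegs_empty, APfinWith_afterLegs hr, Finset.prod_empty, one_mul]
  | insert a T haT ih =>
    obtain ⟨har, haw⟩ := mem_wLegs.1 (hT (Finset.mem_insert_self a T))
    have haT' : a ∉ T := fun ha => lt_irrefl a (haT a ha)
    have hbelow : ∀ j ∈ wLegs s r, j ∉ insert a T → j < a :=
      fun j hj hjT => hup j hj hjT a (Finset.mem_insert_self a T)
    have hsegBelow : ∀ i ∈ segBelow s r a, i < a := fun i hi => (mem_segBelow.1 hi).2.2.1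
    have hlegs : ∀ j ∈ r, letterAt s j = Letter.w →
        (∀ i ∈ segBelow s r a, j < i) ∨ ∀ i ∈ segBelow s r a, i < j := by
      intro j hj hjw
      by_cases hjT : j ∈ insert a T
      · refine Or.inr fun i hi => (hsegBelow i hi).trans_le ?_
        rcases Finset.mem_insert.1 hjT with rfl | hjT
        exacts [le_rfl, (haT j hjT).le]
      · have hjleg := mem_wLegs.2 ⟨hj, hjw⟩
        exact Or.inl fun i hi => (mem_segBelow.1 hi).2.2.2 j hjleg (hbelow j hjleg hjT)
    rw [beyondLegs_insert har haT hbelow,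
      sum_APfinWith_union F hsegBelow
        (fun i hi => (mem_beyondLegs.1 hi).2.2 a (hT (Finset.mem_insert_self a T)) haT')
        har haw (fun i => letterAt_ne_w_of_mem_segBelow hr hn₀ hfirst har) hlegs,
      ih ((Finset.subset_insert a T).trans hT) ?_, Finset.prod_insert haT', mul_assoc]
    intro j hj hjT l hl
    by_cases hja : j = a
    · exact hja ▸ haT l hl
    · exact hup j hj (by simp [hja, hjT]) l (Finset.mem_insert_of_mem hl)

theorem moment_cumulant_formula_general (M L : Word → ℂ)
    (hM1 : M [] = 1) (hL : IsCumulants M L)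
    (s : Word) (n₀ : ℕ) (hn₀ : n₀ < s.length)
    (hfirst : ∀ i < n₀, letterAt s i ≠ Letter.w) :
    M s = ∑ r ∈ C0 s n₀,
        L (wordOf s r) * (∏ l ∈ wLegs s r, M (wordOf s (segBelow s r l))) *
          M (wordOf s (afterLegs s r)) := by
  rw [hL s (List.ne_nil_of_length_pos (by omega)),
    ← Finset.sum_fiberwise_of_maps_to fun P hP => blockOf_mem_C0 hn₀ hP]
  refine Finset.sum_congr rfl fun r hr => ?_
  obtain ⟨hrs, -, hn₀r, hcum⟩ := mem_C0.1 hr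
  rw [sum_APfin_filter_blockOf L hn₀r hrs, ← beyondLegs_wLegs,
    sum_APfinWith_beyondLegs L hcum hn₀r hfirst _ subset_rfl fun j hj hjT => absurd hj hjT,
    mul_assoc]
  simp only [hL.moment_wordOf hM1]

/-- Moment–cumulant formula: for every word `s` containing at least
one `w` (the first one at position `n₀`),
`M(s) = Σ_{r ∈ C₀(s)} L(r) · Π_{v ∈ W_r(s)} M(v) · M(s ∖ (r ∪ ⋃ v))`. -/
theorem moment_cumulant_formula (M L : Word → ℂ)
    (hM1 : M [] = 1) (hL : IsCumulants M L)
    (s : Word) (n₀ : ℕ) (hn₀ : n₀ < s.length)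
    (hw : letterAt s n₀ = Letter.w) (hfirst : ∀ i < n₀, letterAt s i ≠ Letter.w) :
    M s = ∑ r ∈ C0 s n₀,
        L (wordOf s r) * (∏ l ∈ wLegs s r, M (wordOf s (segBelow s r l))) *
          M (wordOf s (afterLegs s r)) :=
  moment_cumulant_formula_general M L hM1 hL s n₀ hn₀ hfirst
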